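/- Let f : ℝᵐ → ℝᵏ be given by f(z) = C z + b for a matrix C and vector b. Suppose S ⊆ ℝᵐ and M is a symmetric matrix such that for all z ∈ S, [z; 1]ᵀ M [z; 1] ≥ 0. If Ω ∈ ℝ^{k×k} is symmetric positive definite and M − Mout ≤ 0, where Mout = [C b; 0 1]ᵀ [[−Ω⁻¹, 0],[0, 1]] [C b; 0 1], then f(S) ⊆ ℰ(0, Ω) = {y : yᵀ Ω⁻¹ y ≤ 1}. -/

import Mathlib

open Matrix

/-- S-procedure style sufficient condition for ellipsoidal containment of the
image of a set `S` under the affine map `z ↦ C z + b`.  If `M` is a quadratic certificate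
valid on `S` (i.e. `[z;1]ᵀ M [z;1] ≥ 0` for all `z ∈ S`) and the LMI `M - Mout ≤ 0` holds
with `Mout = [C b; 0 1]ᵀ [[-Ω⁻¹,0],[0,1]] [C b; 0 1]`, then `f(S) ⊆ ℰ(0, Ω)`. -/
theorem affine_image_in_ellipsoid_of_S_procedure (m k : ℕ)
    (C : Matrix (Fin k) (Fin m) ℝ) (b : Fin k → ℝ) (S : Set (Fin m → ℝ))
    (M : Matrix (Fin m ⊕ Unit) (Fin m ⊕ Unit) ℝ) (hMsymm : M.IsSymm)
    (Ω : Matrix (Fin k) (Fin k) ℝ) (hΩsymm : Ω.IsSymm) (hΩ : Ω.PosDef)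
    (hcert : ∀ z ∈ S,
      0 ≤ (Sum.elim z (fun _ => 1)) ⬝ᵥ (M *ᵥ (Sum.elim z (fun _ => 1))))
    (T : Matrix (Fin k ⊕ Unit) (Fin m ⊕ Unit) ℝ)
    (hT : T = Matrix.fromBlocks C (Matrix.of fun i (_ : Unit) => b i) 0 1)
    (Mout : Matrix (Fin m ⊕ Unit) (Fin m ⊕ Unit) ℝ)
    (hMout : Mout = Tᵀ * (Matrix.fromBlocks (-Ω⁻¹) 0 0 1 : Matrix (Fin k ⊕ Unit) (Fin k ⊕ Unit) ℝ) * T)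
    (hLMI : (Mout - M).PosSemidef) :
    ∀ z ∈ S, (C *ᵥ z + b) ⬝ᵥ (Ω⁻¹ *ᵥ (C *ᵥ z + b)) ≤ 1 := by
  intro z hz
  set w : Fin m ⊕ Unit → ℝ := Sum.elim z (fun _ => 1) with hw
  have h1 : 0 ≤ w ⬝ᵥ ((Mout - M) *ᵥ w) := by
    have := hLMI.dotProduct_mulVec_nonneg w
    simpa using this
  have h2 : 0 ≤ w ⬝ᵥ (Mout *ᵥ w) := by
    have := hcert z hz
    have h3 : w ⬝ᵥ ((Mout - M) *ᵥ w) = w ⬝ᵥ (Mout *ᵥ w) - w ⬝ᵥ (M *ᵥ w) := by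
      simp [Matrix.sub_mulVec, dotProduct_sub]
    rw [h3] at h1
    linarith
  -- compute T *ᵥ w
  set v : Fin k → ℝ := C *ᵥ z + b with hv
  have hTw : T *ᵥ w = Sum.elim v (fun _ => 1) := by
    rw [hT, hw, Matrix.fromBlocks_mulVec]
    funext i
    cases i with
    | inl i => simp [hv, Matrix.mulVec, dotProduct]
    | inr i => simp [Matrix.mulVec, dotProduct]
  have key : w ⬝ᵥ (Mout *ᵥ w) = -(v ⬝ᵥ (Ω⁻¹ *ᵥ v)) + 1 := by
    rw [hMout, Matrix.mul_assoc, ← Matrix.mulVec_mulVec, ← Matrix.mulVec_mulVec,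
      Matrix.dotProduct_mulVec, Matrix.vecMul_transpose, hTw,
      Matrix.fromBlocks_mulVec]
    simp [Matrix.neg_mulVec, dotProduct]
  rw [key] at h2
  linarith
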